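/- Fix q > 1 and y > 0. If 1 < p₁ < p₂ and x₁, x₂ ∈ (0,1) satisfy ∫_0^{x₁} (1-t^q)^{-(1+1/q-1/p₁)} dt = y and ∫_0^{x₂} (1-t^q)^{-(1+1/q-1/p₂)} dt = y, then x₂ < x₁. In other words, the function p ↦ tamh_{p,q}(y) is decreasing on (1,∞). -/

import Mathlib

open MeasureTheory Set

/-!
Let `f_p t = (1 - t ^ q) ^ (-(1 + 1/q - 1/p))`. On `(0, 1)` the base `1 - t ^ q` lies in
`(0, 1)` and the exponent decreases as `p` grows, so `f_{p₁} < f_{p₂}` there; moreover `f_p > 0`,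
so `∫₀^x f_p` increases with `x`. Hence `x₁ ≤ x₂` would give
`y = ∫₀^x₁ f_{p₁} ≤ ∫₀^x₂ f_{p₁} < ∫₀^x₂ f_{p₂} = y`.
-/

section OneSubRpow

variable {q : ℝ}

lemma one_sub_rpow_mem_Ioo (hq : 0 < q) {t : ℝ} (ht : t ∈ Ioo (0 : ℝ) 1) :
    1 - t ^ q ∈ Ioo (0 : ℝ) 1 := by
  have h0 : 0 < t ^ q := Real.rpow_pos_of_pos ht.1 q
  have h1 : t ^ q < 1 := Real.rpow_lt_one ht.1.le ht.2 hq
  constructor <;> linarith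

lemma continuousOn_one_sub_rpow_rpow (hq : 0 < q) (c : ℝ) {b : ℝ} (hb : b < 1) :
    ContinuousOn (fun t : ℝ => (1 - t ^ q) ^ c) (Icc 0 b) := by
  intro t ht
  have hbase : t ^ q < 1 :=
    (Real.rpow_le_rpow ht.1 ht.2 hq.le).trans_lt (Real.rpow_lt_one (ht.1.trans ht.2) hb hq)
  refine ContinuousWithinAt.rpow_const ?_ (Or.inl (by linarith))
  exact continuousWithinAt_const.sub
    (Real.continuousAt_rpow_const t q (Or.inr hq.le)).continuousWithinAt

lemma integral_one_sub_rpow_rpow_le_of_le (hq : 0 < q) (c : ℝ) {x x' : ℝ} (hx : 0 ≤ x)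
    (hxx' : x ≤ x') (hx' : x' < 1) :
    ∫ t in (0 : ℝ)..x, (1 - t ^ q) ^ c ≤ ∫ t in (0 : ℝ)..x', (1 - t ^ q) ^ c := by
  refine intervalIntegral.integral_mono_interval le_rfl hx hxx' ?_
    ((continuousOn_one_sub_rpow_rpow hq c hx').intervalIntegrable_of_Icc (hx.trans hxx'))
  rw [Filter.EventuallyLE, ae_restrict_iff' measurableSet_Ioc]
  filter_upwards with t ht
  exact Real.rpow_nonneg (one_sub_rpow_mem_Ioo hq ⟨ht.1, ht.2.trans_lt hx'⟩).1.le c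

lemma integral_one_sub_rpow_rpow_lt_of_exponent_gt (hq : 0 < q) {x : ℝ}
    (hx : x ∈ Ioo (0 : ℝ) 1) {c c' : ℝ} (hcc' : c < c') :
    ∫ t in (0 : ℝ)..x, (1 - t ^ q) ^ c' < ∫ t in (0 : ℝ)..x, (1 - t ^ q) ^ c := by
  have hlt : ∀ t ∈ Ioc 0 x, (1 - t ^ q) ^ c' < (1 - t ^ q) ^ c := fun t ht => by
    have hbase := one_sub_rpow_mem_Ioo hq ⟨ht.1, ht.2.trans_lt hx.2⟩
    exact Real.rpow_lt_rpow_of_exponent_gt hbase.1 hbase.2 hcc'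
  refine intervalIntegral.integral_lt_integral_of_continuousOn_of_le_of_exists_lt hx.1
    (continuousOn_one_sub_rpow_rpow hq c' hx.2) (continuousOn_one_sub_rpow_rpow hq c hx.2)
    (fun t ht => (hlt t ht).le) ⟨x, right_mem_Icc.2 hx.1.le, hlt x ⟨hx.1, le_rfl⟩⟩

end OneSubRpow

theorem tamh_pq_decreasing_in_p_general (q y : ℝ) (hq : 1 < q)
    (p₁ p₂ x₁ x₂ : ℝ) (hp₁ : 1 < p₁) (hp : p₁ < p₂)
    (hx₁ : x₁ ∈ Set.Ioo (0:ℝ) 1) (hx₂ : x₂ ∈ Set.Ioo (0:ℝ) 1)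
    (h₁ : (∫ t in (0:ℝ)..x₁, (1 - t ^ q) ^ (-(1 + 1 / q - 1 / p₁))) = y)
    (h₂ : (∫ t in (0:ℝ)..x₂, (1 - t ^ q) ^ (-(1 + 1 / q - 1 / p₂))) = y) :
    x₂ < x₁ := by
  by_contra! hle
  have hq₀ : 0 < q := by linarith
  have hexp : -(1 + 1 / q - 1 / p₂) < -(1 + 1 / q - 1 / p₁) := by
    have : 1 / p₂ < 1 / p₁ := one_div_lt_one_div_of_lt (by linarith) hp
    linarith
  have hmono :=
    integral_one_sub_rpow_rpow_le_of_le hq₀ (-(1 + 1 / q - 1 / p₁)) hx₁.1.le hle hx₂.2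
  have hanti := integral_one_sub_rpow_rpow_lt_of_exponent_gt hq₀ hx₂ hexp
  linarith

theorem tamh_pq_decreasing_in_p (q y : ℝ) (hq : 1 < q) (hy : 0 < y)
    (p₁ p₂ x₁ x₂ : ℝ) (hp₁ : 1 < p₁) (hp : p₁ < p₂)
    (hx₁ : x₁ ∈ Set.Ioo (0:ℝ) 1) (hx₂ : x₂ ∈ Set.Ioo (0:ℝ) 1)
    (h₁ : (∫ t in (0:ℝ)..x₁, (1 - t ^ q) ^ (-(1 + 1 / q - 1 / p₁))) = y)
    (h₂ : (∫ t in (0:ℝ)..x₂, (1 - t ^ q) ^ (-(1 + 1 / q - 1 / p₂))) = y) :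
    x₂ < x₁ :=
  tamh_pq_decreasing_in_p_general q y hq p₁ p₂ x₁ x₂ hp₁ hp hx₁ hx₂ h₁ h₂
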